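/- arXiv:math/0611271 — 6 statements merged into one kernel-verified Lean document; each statement's English description precedes it below -/
import Mathlib

section
/- Let A be a C*-hyperbialgebra with coproduct Δ and counit ε, let Ã ⊆ A be a unital C*-subalgebra, and let P: A → Ã be a conditional expectation (norm-one projection onto Ã) satisfying (P ⊗ id)∘Δ∘P = (P ⊗ P)∘Δ = (id ⊗ P)∘Δ. Then the map Δ̃ := (P ⊗ P)∘Δ restricted to Ã is coassociative: (Δ̃ ⊗ id)∘Δ̃ = (id ⊗ Δ̃)∘Δ̃ on Ã. -/
open TensorProduct

/-! On `Ã` the hypotheses on `P` allow dropping either leg of `(P ⊗ P) Δ a`: it equals both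
`(P ⊗ id) Δ a` and `(id ⊗ P) Δ a`. Using the first form on the right-hand side and the second on
the left, coassociativity of `Δ` turns both sides into `(P ⊗ Δ̃) Δ a`. -/

theorem TensorProduct.assoc_map_map_comp_apply_of_coassoc {R A : Type*} [CommSemiring R]
    [AddCommMonoid A] [Module R A] {Δ : A →ₗ[R] A ⊗[R] A}
    (hΔ : ∀ a : A, TensorProduct.assoc R A A A (map Δ LinearMap.id (Δ a)) =
      map LinearMap.id Δ (Δ a))
    (f g h : A →ₗ[R] A) (a : A) :
    TensorProduct.assoc R A A A (map (map f g ∘ₗ Δ) h (Δ a)) =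
      map f (map g h ∘ₗ Δ) (Δ a) := by
  calc TensorProduct.assoc R A A A (map (map f g ∘ₗ Δ) h (Δ a))
      = TensorProduct.assoc R A A A (map (map f g) h (map Δ LinearMap.id (Δ a))) := by
        rw [map_map, LinearMap.comp_id]
    _ = map f (map g h) (TensorProduct.assoc R A A A (map Δ LinearMap.id (Δ a))) :=
        (map_map_assoc f g h _).symm
    _ = map f (map g h ∘ₗ Δ) (Δ a) := by
        rw [hΔ, map_map, LinearMap.comp_id]

theorem stmt_0_general {A : Type*} [NormedRing A] [StarRing A]
    [NormedAlgebra ℂ A] [StarModule ℂ A]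
    (Δ : A →ₗ[ℂ] A ⊗[ℂ] A)
    (hcoassoc : ∀ a : A,
      (TensorProduct.assoc ℂ A A A)
          ((TensorProduct.map Δ (LinearMap.id : A →ₗ[ℂ] A)) (Δ a))
        = (TensorProduct.map (LinearMap.id : A →ₗ[ℂ] A) Δ) (Δ a))
    (Asub : StarSubalgebra ℂ A)
    (P : A →L[ℂ] A)
    (hPfix : ∀ a ∈ Asub, P a = a)
    (h₁ : (TensorProduct.map (P : A →ₗ[ℂ] A) (LinearMap.id : A →ₗ[ℂ] A)).comp
        (Δ.comp (P : A →ₗ[ℂ] A))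
      = (TensorProduct.map (P : A →ₗ[ℂ] A) (P : A →ₗ[ℂ] A)).comp Δ)
    (h₂ : (TensorProduct.map (P : A →ₗ[ℂ] A) (P : A →ₗ[ℂ] A)).comp Δ
      = (TensorProduct.map (LinearMap.id : A →ₗ[ℂ] A) (P : A →ₗ[ℂ] A)).comp Δ)
    (Δt : A →ₗ[ℂ] A ⊗[ℂ] A)
    (hΔt : Δt = (TensorProduct.map (P : A →ₗ[ℂ] A) (P : A →ₗ[ℂ] A)).comp Δ) :
    ∀ a ∈ Asub,
      (TensorProduct.assoc ℂ A A A)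
          ((TensorProduct.map Δt (LinearMap.id : A →ₗ[ℂ] A)) (Δt a))
        = (TensorProduct.map (LinearMap.id : A →ₗ[ℂ] A) Δt) (Δt a) := by
  intro a ha
  set Pₗ : A →ₗ[ℂ] A := (P : A →ₗ[ℂ] A)
  have hleft : map Pₗ LinearMap.id (Δ a) = map Pₗ Pₗ (Δ a) := by
    simpa [Pₗ, hPfix a ha] using LinearMap.congr_fun h₁ a
  have hright : map Pₗ Pₗ (Δ a) = map LinearMap.id Pₗ (Δ a) := LinearMap.congr_fun h₂ a
  subst hΔt
  calc TensorProduct.assoc ℂ A A A (map (map Pₗ Pₗ ∘ₗ Δ) LinearMap.id (map Pₗ Pₗ (Δ a)))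
      = TensorProduct.assoc ℂ A A A (map (map Pₗ Pₗ ∘ₗ Δ) Pₗ (Δ a)) := by
        rw [hright, map_map, LinearMap.comp_id, LinearMap.id_comp]
    _ = map Pₗ (map Pₗ Pₗ ∘ₗ Δ) (Δ a) := assoc_map_map_comp_apply_of_coassoc hcoassoc _ _ _ a
    _ = map LinearMap.id (map Pₗ Pₗ ∘ₗ Δ) (map Pₗ Pₗ (Δ a)) := by
        rw [← hleft, map_map, LinearMap.comp_id, LinearMap.id_comp]

/-- If `P` is a conditional expectation on a C*-hyperbialgebra `A` onto a unital
C*-subalgebra `Ã` satisfying `(P ⊗ id)∘Δ∘P = (P ⊗ P)∘Δ = (id ⊗ P)∘Δ`, then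
`Δ̃ := (P ⊗ P)∘Δ` is coassociative on `Ã`. -/
theorem stmt_0 {A : Type*} [NormedRing A] [StarRing A] [CStarRing A]
    [NormedAlgebra ℂ A] [StarModule ℂ A] [CompleteSpace A]
    (Δ : A →ₗ[ℂ] A ⊗[ℂ] A) (ε : A →⋆ₐ[ℂ] ℂ)
    (hcoassoc : ∀ a : A,
      (TensorProduct.assoc ℂ A A A)
          ((TensorProduct.map Δ (LinearMap.id : A →ₗ[ℂ] A)) (Δ a))
        = (TensorProduct.map (LinearMap.id : A →ₗ[ℂ] A) Δ) (Δ a))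
    (hcounit₁ : ∀ a : A,
      (TensorProduct.lid ℂ A)
        ((TensorProduct.map ε.toLinearMap (LinearMap.id : A →ₗ[ℂ] A)) (Δ a)) = a)
    (hcounit₂ : ∀ a : A,
      (TensorProduct.rid ℂ A)
        ((TensorProduct.map (LinearMap.id : A →ₗ[ℂ] A) ε.toLinearMap) (Δ a)) = a)
    (Asub : StarSubalgebra ℂ A)
    (P : A →L[ℂ] A) (hPnorm : ‖P‖ = 1)
    (hPrange : ∀ a : A, P a ∈ Asub)
    (hPfix : ∀ a ∈ Asub, P a = a)
    (h₁ : (TensorProduct.map (P : A →ₗ[ℂ] A) (LinearMap.id : A →ₗ[ℂ] A)).comp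
        (Δ.comp (P : A →ₗ[ℂ] A))
      = (TensorProduct.map (P : A →ₗ[ℂ] A) (P : A →ₗ[ℂ] A)).comp Δ)
    (h₂ : (TensorProduct.map (P : A →ₗ[ℂ] A) (P : A →ₗ[ℂ] A)).comp Δ
      = (TensorProduct.map (LinearMap.id : A →ₗ[ℂ] A) (P : A →ₗ[ℂ] A)).comp Δ)
    (Δt : A →ₗ[ℂ] A ⊗[ℂ] A)
    (hΔt : Δt = (TensorProduct.map (P : A →ₗ[ℂ] A) (P : A →ₗ[ℂ] A)).comp Δ) :
    ∀ a ∈ Asub,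
      (TensorProduct.assoc ℂ A A A)
          ((TensorProduct.map Δt (LinearMap.id : A →ₗ[ℂ] A)) (Δt a))
        = (TensorProduct.map (LinearMap.id : A →ₗ[ℂ] A) Δt) (Δt a) :=
  stmt_0_general Δ hcoassoc Asub P hPfix h₁ h₂ Δt hΔt
end

section
/- Let A be a C*-hyperbialgebra with coproduct Δ and counit ε, let Ã ⊆ A be a unital C*-subalgebra with conditional expectation P: A → Ã satisfying (P ⊗ id)∘Δ∘P = (P ⊗ P)∘Δ = (id ⊗ P)∘Δ. Define Δ̃ = (P⊗P)∘Δ|_Ã and ε̃ = ε|_Ã. Then ε̃ satisfies the counit property for Δ̃: (ε̃ ⊗ id)∘Δ̃ = (id ⊗ ε̃)∘Δ̃ = id on Ã. -/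
/-!
On `Ã` the hypotheses give `Δ̃ = (id ⊗ P) ∘ Δ = (P ⊗ id) ∘ Δ`. Slicing the tensor leg carrying `P`
with `ε` commutes with `P`, so `(ε ⊗ id) ∘ Δ̃ = P ∘ (ε ⊗ id) ∘ Δ = P`, which is the identity on `Ã`;
symmetrically for `id ⊗ ε`.
-/

open TensorProduct LinearMap

section CounitNaturality

variable {R M N N' : Type*} [CommSemiring R] [AddCommMonoid M] [AddCommMonoid N]
  [AddCommMonoid N'] [Module R M] [Module R N] [Module R N']

theorem lid_map_map_id (φ : M →ₗ[R] R) (f : N →ₗ[R] N') (x : M ⊗[R] N) :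
    TensorProduct.lid R N' (map φ id (map id f x)) = f (TensorProduct.lid R N (map φ id x)) := by
  induction x using TensorProduct.induction_on with
  | zero => simp
  | tmul m n => simp
  | add x y hx hy => simp only [map_add, hx, hy]

theorem rid_map_id_map (φ : M →ₗ[R] R) (f : N →ₗ[R] N') (x : N ⊗[R] M) :
    TensorProduct.rid R N' (map id φ (map f id x)) = f (TensorProduct.rid R N (map id φ x)) := by
  induction x using TensorProduct.induction_on with
  | zero => simp
  | tmul n m => simp
  | add x y hx hy => simp only [map_add, hx, hy]

end CounitNaturality

theorem stmt_1_general {A : Type*} [NormedRing A] [StarRing A]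
    [NormedAlgebra ℂ A] [StarModule ℂ A]
    (Δ : A →ₗ[ℂ] A ⊗[ℂ] A) (ε : A →⋆ₐ[ℂ] ℂ)
    (hcounit₁ : ∀ a : A,
      (TensorProduct.lid ℂ A)
        ((TensorProduct.map ε.toLinearMap (LinearMap.id : A →ₗ[ℂ] A)) (Δ a)) = a)
    (hcounit₂ : ∀ a : A,
      (TensorProduct.rid ℂ A)
        ((TensorProduct.map (LinearMap.id : A →ₗ[ℂ] A) ε.toLinearMap) (Δ a)) = a)
    (Asub : StarSubalgebra ℂ A)
    (P : A →L[ℂ] A)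
    (hPfix : ∀ a ∈ Asub, P a = a)
    (h₁ : (TensorProduct.map (P : A →ₗ[ℂ] A) (LinearMap.id : A →ₗ[ℂ] A)).comp
        (Δ.comp (P : A →ₗ[ℂ] A))
      = (TensorProduct.map (P : A →ₗ[ℂ] A) (P : A →ₗ[ℂ] A)).comp Δ)
    (h₂ : (TensorProduct.map (P : A →ₗ[ℂ] A) (P : A →ₗ[ℂ] A)).comp Δ
      = (TensorProduct.map (LinearMap.id : A →ₗ[ℂ] A) (P : A →ₗ[ℂ] A)).comp Δ)
    (Δt : A →ₗ[ℂ] A ⊗[ℂ] A)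
    (hΔt : Δt = (TensorProduct.map (P : A →ₗ[ℂ] A) (P : A →ₗ[ℂ] A)).comp Δ) :
    ∀ a ∈ Asub,
      (TensorProduct.lid ℂ A)
          ((TensorProduct.map ε.toLinearMap (LinearMap.id : A →ₗ[ℂ] A)) (Δt a)) = a
      ∧ (TensorProduct.rid ℂ A)
          ((TensorProduct.map (LinearMap.id : A →ₗ[ℂ] A) ε.toLinearMap) (Δt a)) = a := by
  intro a ha
  have hPa : P a = a := hPfix a ha
  have hΔt_right : Δt a = map id (P : A →ₗ[ℂ] A) (Δ a) := by
    rw [hΔt, h₂, comp_apply]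
  have hΔt_left : Δt a = map (P : A →ₗ[ℂ] A) id (Δ a) := by
    rw [hΔt, ← h₁, comp_apply, comp_apply, ContinuousLinearMap.coe_coe, hPa]
  constructor
  · rw [hΔt_right, lid_map_map_id, hcounit₁, ContinuousLinearMap.coe_coe, hPa]
  · rw [hΔt_left, rid_map_id_map, hcounit₂, ContinuousLinearMap.coe_coe, hPa]

/-- With `P` a conditional expectation intertwining the coproduct as stated, the
restricted counit `ε̃ = ε|_Ã` satisfies the counit property for `Δ̃ = (P⊗P)∘Δ|_Ã`. -/
theorem stmt_1 {A : Type*} [NormedRing A] [StarRing A] [CStarRing A]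
    [NormedAlgebra ℂ A] [StarModule ℂ A] [CompleteSpace A]
    (Δ : A →ₗ[ℂ] A ⊗[ℂ] A) (ε : A →⋆ₐ[ℂ] ℂ)
    (hcoassoc : ∀ a : A,
      (TensorProduct.assoc ℂ A A A)
          ((TensorProduct.map Δ (LinearMap.id : A →ₗ[ℂ] A)) (Δ a))
        = (TensorProduct.map (LinearMap.id : A →ₗ[ℂ] A) Δ) (Δ a))
    (hcounit₁ : ∀ a : A,
      (TensorProduct.lid ℂ A)
        ((TensorProduct.map ε.toLinearMap (LinearMap.id : A →ₗ[ℂ] A)) (Δ a)) = a)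
    (hcounit₂ : ∀ a : A,
      (TensorProduct.rid ℂ A)
        ((TensorProduct.map (LinearMap.id : A →ₗ[ℂ] A) ε.toLinearMap) (Δ a)) = a)
    (Asub : StarSubalgebra ℂ A)
    (P : A →L[ℂ] A) (hPnorm : ‖P‖ = 1)
    (hPrange : ∀ a : A, P a ∈ Asub)
    (hPfix : ∀ a ∈ Asub, P a = a)
    (h₁ : (TensorProduct.map (P : A →ₗ[ℂ] A) (LinearMap.id : A →ₗ[ℂ] A)).comp
        (Δ.comp (P : A →ₗ[ℂ] A))
      = (TensorProduct.map (P : A →ₗ[ℂ] A) (P : A →ₗ[ℂ] A)).comp Δ)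
    (h₂ : (TensorProduct.map (P : A →ₗ[ℂ] A) (P : A →ₗ[ℂ] A)).comp Δ
      = (TensorProduct.map (LinearMap.id : A →ₗ[ℂ] A) (P : A →ₗ[ℂ] A)).comp Δ)
    (Δt : A →ₗ[ℂ] A ⊗[ℂ] A)
    (hΔt : Δt = (TensorProduct.map (P : A →ₗ[ℂ] A) (P : A →ₗ[ℂ] A)).comp Δ) :
    ∀ a ∈ Asub,
      (TensorProduct.lid ℂ A)
          ((TensorProduct.map ε.toLinearMap (LinearMap.id : A →ₗ[ℂ] A)) (Δt a)) = a
      ∧ (TensorProduct.rid ℂ A)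
          ((TensorProduct.map (LinearMap.id : A →ₗ[ℂ] A) ε.toLinearMap) (Δt a)) = a :=
  stmt_1_general Δ ε hcounit₁ hcounit₂ Asub P hPfix h₁ h₂ Δt hΔt
end

section
/- Let A be a unital C*-algebra and ε: A → ℂ a character. Then every bounded linear map λ: A → ℂ satisfying λ(ab) = ε(a)λ(b) + λ(a)ε(b) for all a, b ∈ A (i.e., every bounded (ε,ε)-derivation) is identically zero. -/
open NormedSpace Complex

/-- Every bounded `(ε,ε)`-derivation on a unital C*-algebra, for a character `ε`,
is identically zero. -/
theorem stmt_3 {A : Type*} [NormedRing A] [StarRing A] [CStarRing A]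
    [NormedAlgebra ℂ A] [StarModule ℂ A] [CompleteSpace A]
    (ε : A →⋆ₐ[ℂ] ℂ) (l : A →L[ℂ] ℂ)
    (hder : ∀ a b : A, l (a * b) = ε a * l b + l a * ε b) :
    ∀ a : A, l a = 0 := by
  intro a
  rcases subsingleton_or_nontrivial A with h | h
  · rw [Subsingleton.elim a 0, map_zero]
  -- the character is bounded, hence continuous
  have hεb : ∀ x : A, ‖ε x‖ ≤ ‖x‖ := fun x =>
    spectrum.norm_le_norm_of_mem (AlgHom.apply_mem_spectrum ε x)
  have hεcont : Continuous ε :=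
    AddMonoidHomClass.continuous_of_bound ε 1 (fun x => by simpa using hεb x)
  -- l 1 = 0
  have hl1 : l 1 = 0 := by
    have h11 := hder 1 1
    simp only [one_mul, mul_one, map_one] at h11
    have : l 1 + l 1 = l 1 + 0 := by rw [add_zero]; linear_combination -h11
    exact (add_left_cancel this)
  -- key step: if ε c = 0 and all exp (t • c) have norm ≤ 1, then l c = 0
  have key : ∀ c : A, ε c = 0 → (∀ t : ℝ, ‖exp (t • c)‖ ≤ 1) → l c = 0 := by
    intro c hc hbd
    let +nondep : NormedAlgebra ℚ A := .restrictScalars ℚ ℂ A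
    set g : ℝ → ℂ := fun t => l (exp (t • c)) with hg
    have hε1 : ∀ t : ℝ, ε (exp (t • c)) = 1 := by
      intro t
      rw [map_exp ε hεcont]
      have : ε (t • c) = 0 := by
        rw [show (t • c : A) = ((t : ℂ) • c) by simp, map_smul, hc, smul_zero]
      rw [this, NormedSpace.exp_zero]
    have gadd : ∀ s t : ℝ, g (s + t) = g s + g t := by
      intro s t
      have hsplit : exp ((s + t) • c) = exp (s • c) * exp (t • c) := by
        rw [add_smul]
        exact exp_add_of_commute (((Commute.refl c).smul_left s).smul_right t)
      simp only [hg, hsplit, hder, hε1, one_mul, mul_one]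
      exact add_comm _ _
    have gbdd : ∀ t : ℝ, ‖g t‖ ≤ ‖l‖ := by
      intro t
      calc ‖g t‖ ≤ ‖l‖ * ‖exp (t • c)‖ := l.le_opNorm _
        _ ≤ ‖l‖ := mul_le_of_le_one_right (norm_nonneg l) (hbd t)
    have g0 : g 0 = 0 := by
      simp only [hg, zero_smul, NormedSpace.exp_zero, hl1]
    have gnat : ∀ (n : ℕ) (t : ℝ), g ((n : ℝ) * t) = (n : ℂ) * g t := by
      intro n
      induction n with
      | zero => intro t; simp [g0]
      | succ n ih =>
        intro t
        push_cast
        rw [add_mul, one_mul, gadd, ih]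
        ring
    have gzero : ∀ t : ℝ, g t = 0 := by
      intro t
      by_contra hne
      have hpos : 0 < ‖g t‖ := norm_pos_iff.mpr hne
      obtain ⟨n, hn⟩ := exists_nat_gt (‖l‖ / ‖g t‖)
      have h1 : (n : ℝ) * ‖g t‖ ≤ ‖l‖ := by
        have := gbdd ((n : ℝ) * t)
        rwa [gnat n t, norm_mul, Complex.norm_natCast] at this
      have h2 : ‖l‖ < (n : ℝ) * ‖g t‖ := by
        rw [div_lt_iff₀ hpos] at hn; linarith
      linarith
    -- differentiate at 0
    have hde : HasDerivAt (fun t : ℝ => exp (t • c)) c 0 := by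
      have h := hasDerivAt_exp_smul_const (𝕂 := ℝ) c (0 : ℝ)
      simpa [NormedSpace.exp_zero] using h
    have hdg : HasDerivAt g (l c) 0 := by
      have := ((l.restrictScalars ℝ).hasFDerivAt.comp_hasDerivAt 0 hde)
      exact this
    have hdg0 : HasDerivAt g 0 0 := by
      have : g = fun _ => (0 : ℂ) := funext gzero
      rw [this]; exact hasDerivAt_const 0 0
    exact hdg.unique hdg0
  -- l vanishes on self-adjoint elements of ker ε
  have keysa : ∀ x : A, IsSelfAdjoint x → ε x = 0 → l x = 0 := by
    intro x hx hεx
    have hc : ε (I • x) = 0 := by rw [map_smul, hεx, smul_zero]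
    have hbd : ∀ t : ℝ, ‖exp (t • (I • x))‖ ≤ 1 := by
      intro t
      have hsa : IsSelfAdjoint ((t : ℂ) • x) :=
        IsSelfAdjoint.smul (show star ((t : ℂ)) = ((t : ℂ)) by
          simp [Complex.star_def, Complex.conj_ofReal]) hx
      have heq : (t • (I • x) : A) = I • ((t : ℂ) • x) := by
        rw [smul_comm]; simp
      rw [heq]
      have := CStarRing.norm_coe_unitary (selfAdjoint.expUnitary ⟨(t : ℂ) • x, hsa⟩)
      rw [selfAdjoint.expUnitary_coe] at this
      exact le_of_eq this
    have := key (I • x) hc hbd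
    rw [map_smul, smul_eq_mul] at this
    exact (mul_eq_zero.mp this).resolve_left I_ne_zero
  -- decompose a general element
  set b : A := a - ε a • 1 with hb
  have hεb0 : ε b = 0 := by simp [hb]
  have hlb : l b = l a := by simp [hb, hl1]
  set x : A := (2 : ℂ)⁻¹ • (b + star b) with hx
  set y : A := (I / 2) • (star b - b) with hy
  have hxsa : IsSelfAdjoint x := by
    simp only [IsSelfAdjoint, hx, star_smul, star_add, star_star]
    rw [show star ((2 : ℂ)⁻¹) = (2 : ℂ)⁻¹ by simp, add_comm]
  have hysa : IsSelfAdjoint y := by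
    simp only [IsSelfAdjoint, hy, star_smul, star_sub, star_star]
    rw [show star (I / 2 : ℂ) = -(I / 2) by simp [Complex.star_def]; ring, neg_smul,
      ← smul_neg, neg_sub]
  have hεx : ε x = 0 := by
    simp [hx, map_smul, map_add, map_star, hεb0]
  have hεy : ε y = 0 := by
    simp [hy, map_smul, map_sub, map_star, hεb0]
  have hdecomp : b = x + I • y := by
    rw [hx, hy, smul_smul]
    have : I * (I / 2) = -(2 : ℂ)⁻¹ := by
      rw [← mul_div_assoc, Complex.I_mul_I]; ring
    rw [this, neg_smul, ← smul_neg, neg_sub, ← smul_add]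
    rw [show (b + star b) + (b - star b) = (2 : ℂ) • b by rw [two_smul]; abel]
    rw [smul_smul]
    simp
  have hlx := keysa x hxsa hεx
  have hly := keysa y hysa hεy
  have : l b = 0 := by
    rw [hdecomp, map_add, hlx, map_smul, hly, smul_zero, add_zero]
  rw [← hlb, this]
end

section
/- Let H, K be Hilbert spaces, t ∈ ℝ, d ∈ H, and D ∈ B(H; K). The block operator T = [[t, ⟨d|], [|d⟩, D*D − I_H]] on ℂ ⊕ H is negative (T ≤ 0) if and only if D is a contraction, t ≤ 0, and there exists e ∈ H with d = (I_H − D*D)^{1/2} e and ‖e‖² ≤ −t. -/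
/-!
Since `D*D - I = -S²` with `S` self-adjoint, the quadratic form of `T` at `(z, h)` is
`t|z|² + 2 Re (z ⟨h, d⟩) - ‖S h‖²`. For fixed `h` this is a real quadratic in `z`, so `T ≤ 0`
iff `t ≤ 0` and `|⟨d, h⟩|² ≤ -t ‖S h‖²` for all `h`. By the Douglas range-inclusion argument
(the functional `S h ↦ ⟨d, h⟩` is bounded on the range of `S`: extend it by Hahn–Banach and
represent it by Riesz) the latter says exactly `d = S e` with `‖e‖² ≤ -t`. Finally `‖D‖ ≤ 1`
follows from `‖D h‖² = ‖h‖² - ‖S h‖²`.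
-/

open ContinuousLinearMap RCLike
open scoped InnerProductSpace ComplexConjugate

section Douglas

variable {𝕜 E F : Type*} [RCLike 𝕜]
  [NormedAddCommGroup E] [InnerProductSpace 𝕜 E] [CompleteSpace E]
  [NormedAddCommGroup F] [InnerProductSpace 𝕜 F] [CompleteSpace F]

theorem exists_adjoint_apply_eq_of_norm_inner_le (S : E →L[𝕜] F) {d : E} {c : ℝ}
    (hc : 0 ≤ c) (hd : ∀ x, ‖⟪d, x⟫_𝕜‖ ≤ c * ‖S x‖) : ∃ e, adjoint S e = d ∧ ‖e‖ ≤ c := by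
  have hker : LinearMap.ker (S : E →ₗ[𝕜] F) ≤ LinearMap.ker (innerₛₗ 𝕜 d) := fun x hx => by
    simpa [show S x = 0 from hx] using hd x
  let ψ : LinearMap.range (S : E →ₗ[𝕜] F) →ₗ[𝕜] 𝕜 :=
    (LinearMap.ker _).liftQ (innerₛₗ 𝕜 d) hker ∘ₗ (S : E →ₗ[𝕜] F).quotKerEquivRange.symm
  have hψ : ∀ x, ψ ⟨(S : E →ₗ[𝕜] F) x, LinearMap.mem_range_self _ x⟩ = ⟪d, x⟫_𝕜 := fun x => by
    rw [LinearMap.comp_apply, LinearEquiv.coe_coe, LinearMap.quotKerEquivRange_symm_apply_image]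
    rfl
  have hψc : ∀ y, ‖ψ y‖ ≤ c * ‖y‖ := by
    rintro ⟨-, x, rfl⟩
    rw [hψ]
    exact hd x
  obtain ⟨g, hg, hgn⟩ := exists_extension_norm_eq _ (ψ.mkContinuous c hψc)
  refine ⟨(InnerProductSpace.toDual 𝕜 F).symm g, ext_inner_right 𝕜 fun x => ?_, ?_⟩
  · rw [adjoint_inner_left, InnerProductSpace.toDual_symm_apply, hg ⟨S x, _⟩]
    exact hψ x
  · rw [LinearIsometryEquiv.norm_map, hgn]
    exact LinearMap.mkContinuous_norm_le _ hc hψc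

theorem forall_norm_inner_le_iff_exists_adjoint_apply_eq (S : E →L[𝕜] F) {d : E} {c : ℝ}
    (hc : 0 ≤ c) : (∀ x, ‖⟪d, x⟫_𝕜‖ ≤ c * ‖S x‖) ↔ ∃ e, adjoint S e = d ∧ ‖e‖ ≤ c := by
  refine ⟨exists_adjoint_apply_eq_of_norm_inner_le S hc, ?_⟩
  rintro ⟨e, rfl, he⟩ x
  rw [adjoint_inner_left]
  exact (norm_inner_le_norm e (S x)).trans (mul_le_mul_of_nonneg_right he (norm_nonneg _))

end Douglas

theorem forall_two_re_mul_le_iff {𝕜 : Type*} [RCLike 𝕜] {a : 𝕜} {s q : ℝ} (hs : 0 ≤ s)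
    (hq : 0 ≤ q) : (∀ z : 𝕜, 2 * re (z * a) ≤ s * ‖z‖ ^ 2 + q) ↔ ‖a‖ ^ 2 ≤ s * q := by
  constructor
  · intro h
    have hdisc : discrim (s * ‖a‖ ^ 2) (-2 * ‖a‖ ^ 2) q ≤ 0 := discrim_le_zero fun x => by
      have hx := h (x * conj a)
      rw [mul_assoc, RCLike.conj_mul, norm_mul, norm_conj, norm_ofReal, ← ofReal_pow,
        ← ofReal_mul, ofReal_re, mul_pow, sq_abs] at hx
      linarith
    rw [discrim] at hdisc
    nlinarith [sq_nonneg ‖a‖, mul_nonneg hs hq]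
  · intro h z
    have hre : re (z * a) ≤ ‖z‖ * ‖a‖ := (re_le_norm _).trans (norm_mul _ _).le
    have hsq : (2 * (‖z‖ * ‖a‖)) ^ 2 ≤ (s * ‖z‖ ^ 2 + q) ^ 2 := by
      nlinarith [sq_nonneg (s * ‖z‖ ^ 2 - q), sq_nonneg ‖z‖]
    have := (pow_le_pow_iff_left₀ (by positivity) (by positivity) two_ne_zero).1 hsq
    linarith

theorem norm_sq_apply_eq_of_adjoint_comp_self_eq {𝕜 E F G : Type*} [RCLike 𝕜]
    [NormedAddCommGroup E] [InnerProductSpace 𝕜 E] [CompleteSpace E]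
    [NormedAddCommGroup F] [InnerProductSpace 𝕜 F] [CompleteSpace F]
    [NormedAddCommGroup G] [InnerProductSpace 𝕜 G] [CompleteSpace G]
    {S : E →L[𝕜] F} {A : E →L[𝕜] G} (h : adjoint S ∘L S = 1 - adjoint A ∘L A) (x : E) :
    ‖S x‖ ^ 2 = ‖x‖ ^ 2 - ‖A x‖ ^ 2 := by
  rw [apply_norm_sq_eq_inner_adjoint_left, apply_norm_sq_eq_inner_adjoint_left, h, sub_apply,
    one_apply_eq_self, inner_sub_left, map_sub, inner_self_eq_norm_sq]

section Bordered

variable {H K : Type*}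
  [NormedAddCommGroup H] [InnerProductSpace ℂ H] [CompleteSpace H]
  [NormedAddCommGroup K] [InnerProductSpace ℂ K] [CompleteSpace K]

/-- `T = [[t, ⟨d|], [|d⟩, -S*S]]` on `ℂ ⊕ H`. -/
def IsBorderedNegGram (t : ℝ) (d : H) (S : H →L[ℂ] K)
    (T : WithLp 2 (ℂ × H) →L[ℂ] WithLp 2 (ℂ × H)) : Prop :=
  ∀ z h, T (WithLp.toLp 2 (z, h)) = WithLp.toLp 2 (t * z + ⟪d, h⟫_ℂ, z • d - adjoint S (S h))

variable {t : ℝ} {d : H} {S : H →L[ℂ] K} {T : WithLp 2 (ℂ × H) →L[ℂ] WithLp 2 (ℂ × H)}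

theorem IsBorderedNegGram.inner_apply_toLp_self (hT : IsBorderedNegGram t d S T) (z : ℂ) (h : H) :
    ⟪T (WithLp.toLp 2 (z, h)), WithLp.toLp 2 (z, h)⟫_ℂ
      = ((t * ‖z‖ ^ 2 + 2 * re (z * ⟪h, d⟫_ℂ) - ‖S h‖ ^ 2 : ℝ) : ℂ) := by
  rw [hT z h, WithLp.prod_inner_apply]
  dsimp only
  rw [inner_sub_left, inner_smul_left, adjoint_inner_left, inner_self_eq_norm_sq_to_K,
    ← inner_conj_symm h d, RCLike.inner_apply, map_add, map_mul, Complex.conj_ofReal]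
  have hre : ((re (z * conj ⟪d, h⟫_ℂ) : ℝ) : ℂ)
      = (z * conj ⟪d, h⟫_ℂ + conj z * ⟪d, h⟫_ℂ) / 2 := by
    rw [re_to_complex, Complex.re_eq_add_conj, map_mul, RCLike.conj_conj]
  push_cast
  linear_combination (t : ℂ) * RCLike.mul_conj z - 2 * hre

theorem IsBorderedNegGram.neg_isPositive_iff_forall (hT : IsBorderedNegGram t d S T) :
    (-T).IsPositive ↔ ∀ z h, 2 * re (z * ⟪h, d⟫_ℂ) ≤ -t * ‖z‖ ^ 2 + ‖S h‖ ^ 2 := by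
  rw [isPositive_iff_complex, (WithLp.equiv 2 (ℂ × H)).forall_congr_left, Prod.forall]
  refine forall₂_congr fun z h => ?_
  simp only [WithLp.equiv_symm_apply, neg_apply, inner_neg_left, hT.inner_apply_toLp_self,
    ← Complex.ofReal_neg, re_to_complex, Complex.ofReal_re, true_and]
  constructor <;> intro <;> linarith

theorem IsBorderedNegGram.neg_isPositive_iff (hT : IsBorderedNegGram t d S T) :
    (-T).IsPositive ↔ t ≤ 0 ∧ ∃ e, d = adjoint S e ∧ ‖e‖ ^ 2 ≤ -t := by
  rw [hT.neg_isPositive_iff_forall]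
  calc (∀ z h, 2 * re (z * ⟪h, d⟫_ℂ) ≤ -t * ‖z‖ ^ 2 + ‖S h‖ ^ 2)
      ↔ t ≤ 0 ∧ ∀ h, ‖⟪h, d⟫_ℂ‖ ^ 2 ≤ -t * ‖S h‖ ^ 2 := by
        refine ⟨fun hQ => ?_, fun ⟨ht, hd⟩ z h =>
          (forall_two_re_mul_le_iff (neg_nonneg.2 ht) (sq_nonneg _)).2 (hd h) z⟩
        have ht : t ≤ 0 := by simpa using hQ 1 0
        exact ⟨ht, fun h =>
          (forall_two_re_mul_le_iff (neg_nonneg.2 ht) (sq_nonneg _)).1 fun z => hQ z h⟩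
    _ ↔ t ≤ 0 ∧ ∀ h, ‖⟪d, h⟫_ℂ‖ ≤ √(-t) * ‖S h‖ :=
        and_congr_right fun ht => forall_congr' fun h => by
          rw [norm_inner_symm, ← sq_le_sq₀ (norm_nonneg _) (by positivity), mul_pow,
            Real.sq_sqrt (neg_nonneg.2 ht)]
    _ ↔ t ≤ 0 ∧ ∃ e, adjoint S e = d ∧ ‖e‖ ≤ √(-t) := and_congr_right fun _ =>
        forall_norm_inner_le_iff_exists_adjoint_apply_eq S (Real.sqrt_nonneg _)
    _ ↔ t ≤ 0 ∧ ∃ e, d = adjoint S e ∧ ‖e‖ ^ 2 ≤ -t :=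
        and_congr_right fun ht => exists_congr fun e => by
          rw [eq_comm, Real.le_sqrt (norm_nonneg _) (neg_nonneg.2 ht)]

end Bordered

/-- The block operator `T = [[t, ⟨d|], [|d⟩, D*D − I]]` on `ℂ ⊕ H` is negative iff `D` is a
contraction, `t ≤ 0`, and `d = (I − D*D)^{1/2} e` for some `e` with `‖e‖² ≤ −t`.
Here `S` is the positive square root of `I − D*D`. -/
theorem stmt_6 {H K : Type*}
    [NormedAddCommGroup H] [InnerProductSpace ℂ H] [CompleteSpace H]
    [NormedAddCommGroup K] [InnerProductSpace ℂ K] [CompleteSpace K]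
    (t : ℝ) (d : H) (D : H →L[ℂ] K)
    (S : H →L[ℂ] H) (hSpos : S.IsPositive)
    (hSsq : S ∘L S = 1 - ContinuousLinearMap.adjoint D ∘L D)
    (T : WithLp 2 (ℂ × H) →L[ℂ] WithLp 2 (ℂ × H))
    (hT : ∀ (z : ℂ) (h : H),
      T ((WithLp.equiv 2 (ℂ × H)).symm (z, h))
        = (WithLp.equiv 2 (ℂ × H)).symm
            ((t : ℂ) * z + (inner ℂ d h : ℂ),
             z • d + ContinuousLinearMap.adjoint D (D h) - h)) :
    (-T).IsPositive ↔
      (‖D‖ ≤ 1 ∧ t ≤ 0 ∧ ∃ e : H, d = S e ∧ ‖e‖ ^ 2 ≤ -t) := by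
  have hSa : adjoint S = S := hSpos.isSelfAdjoint.adjoint_eq
  have hS : ∀ h, ‖S h‖ ^ 2 = ‖h‖ ^ 2 - ‖D h‖ ^ 2 :=
    norm_sq_apply_eq_of_adjoint_comp_self_eq (by rwa [hSa])
  have hD : ‖D‖ ≤ 1 := opNorm_le_bound _ zero_le_one fun h => by
    rw [one_mul, ← sq_le_sq₀ (norm_nonneg _) (norm_nonneg _)]
    nlinarith [hS h, sq_nonneg ‖S h‖]
  have hbordered : IsBorderedNegGram t d S T := fun z h => by
    rw [hSa, ← comp_apply, hSsq, sub_apply, one_apply_eq_self, comp_apply, sub_sub_eq_add_sub]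
    exact hT z h
  rw [hbordered.neg_isPositive_iff, hSa]
  exact (and_iff_right hD).symm
end

section
/- Let A be a unital C*-algebra with character ε, (ρ, K) a unital *-representation, D ∈ B(k; K), d ∈ k, ξ ∈ K, t ∈ ℝ. Define δ(a) = (ρ(a) − ε(a))|ξ⟩ and λ(a) = ε(a)(t − ‖ξ‖²) + ⟨ξ, ρ(a)ξ⟩. Suppose D is a partial isometry, Dd = 0, DD* commutes with ρ(A), t = −‖d‖², and DD*δ(a) = δ(a) for all a. Then for all a, b ∈ A: (i) D*ρ(a)DD*ρ(b)D = D*ρ(ab)D, and (ii) λ(a*b) = ⟨D*δ(a)1 + ε(a)d, D*δ(b)1 + ε(b)d⟩ + λ(a*)ε(b) + ε(a*)λ(b). -/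
/-!
Relation (i) holds because the range projection `D D*` commutes with `ρ(b)` and fixes the range
of the partial isometry `D`, so it can be dropped from `D* ρ(a) (D D*) ρ(b) D`. For (ii), both
sides are expanded: since `D D*` fixes `δ(b)` and `D d = 0`, the inner product on the right
equals `⟨δ(a), δ(b)⟩ + conj ε(a) ε(b) ‖d‖²`, and `⟨δ(a), δ(b)⟩` is rewritten using
`ρ(a)* = ρ(a*)`; the choice `t = -‖d‖²` makes the `‖d‖²` terms cancel.
-/

open ContinuousLinearMap ComplexConjugate

section

variable {k K : Type*}
  [NormedAddCommGroup k] [InnerProductSpace ℂ k] [CompleteSpace k]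
  [NormedAddCommGroup K] [InnerProductSpace ℂ K] [CompleteSpace K]

theorem proj_comp_comp_eq_of_commute {D : k →L[ℂ] K} (hpi : D ∘L adjoint D ∘L D = D)
    {T : K →L[ℂ] K} (hT : (D ∘L adjoint D) ∘L T = T ∘L (D ∘L adjoint D)) :
    D ∘L adjoint D ∘L T ∘L D = T ∘L D := by
  calc D ∘L adjoint D ∘L T ∘L D = ((D ∘L adjoint D) ∘L T) ∘L D := rfl
    _ = T ∘L D ∘L adjoint D ∘L D := by rw [hT]; rfl
    _ = T ∘L D := by rw [hpi]

theorem inner_adjoint_add_smul_adjoint_add_smul {D : k →L[ℂ] K} {d : k} (hDd : D d = 0)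
    {v w : K} (hw : (D ∘L adjoint D) w = w) (α β : ℂ) :
    inner ℂ (adjoint D v + α • d) (adjoint D w + β • d)
      = inner ℂ v w + conj α * β * (‖d‖ : ℂ) ^ 2 := by
  have hvw : inner ℂ (adjoint D v) (adjoint D w) = inner ℂ v w := by
    rw [adjoint_inner_left]; exact congrArg (inner ℂ v) hw
  have hvd : inner ℂ (adjoint D v) d = 0 := by
    rw [adjoint_inner_left, hDd, inner_zero_right]
  have hdw : inner ℂ d (adjoint D w) = 0 := by
    rw [adjoint_inner_right, hDd, inner_zero_left]
  simp only [inner_add_left, inner_add_right, inner_smul_left, inner_smul_right, hvw, hvd, hdw,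
    inner_self_eq_norm_sq_to_K, RCLike.ofReal_eq_complex_ofReal]
  ring

variable {A : Type*} [Ring A] [StarRing A] [Algebra ℂ A] (ρ : A →⋆ₐ[ℂ] (K →L[ℂ] K))

theorem inner_map_apply_left (a : A) (x y : K) :
    inner ℂ (ρ a x) y = inner ℂ x (ρ (star a) y) := by
  rw [← adjoint_inner_left, ← star_eq_adjoint, ← map_star, star_star]

theorem inner_map_apply_sub_smul (ξ : K) (a b : A) (α β : ℂ) :
    inner ℂ (ρ a ξ - α • ξ) (ρ b ξ - β • ξ)
      = inner ℂ ξ (ρ (star a * b) ξ) - conj α * inner ℂ ξ (ρ b ξ)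
        - β * inner ℂ ξ (ρ (star a) ξ) + conj α * β * (‖ξ‖ : ℂ) ^ 2 := by
  have hab : inner ℂ (ρ a ξ) (ρ b ξ) = inner ℂ ξ (ρ (star a * b) ξ) := by
    rw [inner_map_apply_left, map_mul]; rfl
  simp only [inner_sub_left, inner_sub_right, inner_smul_left, inner_smul_right, hab,
    inner_map_apply_left ρ a ξ ξ, inner_self_eq_norm_sq_to_K,
    RCLike.ofReal_eq_complex_ofReal]
  ring

end

theorem stmt_11_general {A : Type*} [NormedRing A] [StarRing A]
    [NormedAlgebra ℂ A]
    {k K : Type*}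
    [NormedAddCommGroup k] [InnerProductSpace ℂ k] [CompleteSpace k]
    [NormedAddCommGroup K] [InnerProductSpace ℂ K] [CompleteSpace K]
    (ε : A →⋆ₐ[ℂ] ℂ) (ρ : A →⋆ₐ[ℂ] (K →L[ℂ] K))
    (D : k →L[ℂ] K) (d : k) (ξ : K) (t : ℝ)
    (δ : A → K) (hδ : ∀ a : A, δ a = ρ a ξ - ε a • ξ)
    (lam : A → ℂ)
    (hlam : ∀ a : A, lam a = ε a * ((t : ℂ) - (‖ξ‖ ^ 2 : ℝ)) + (inner ℂ ξ (ρ a ξ) : ℂ))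
    (hpi : D ∘L ContinuousLinearMap.adjoint D ∘L D = D)
    (hDd : D d = 0)
    (hcomm : ∀ a : A, (D ∘L ContinuousLinearMap.adjoint D) ∘L ρ a
        = ρ a ∘L (D ∘L ContinuousLinearMap.adjoint D))
    (ht : t = -‖d‖ ^ 2)
    (hDDδ : ∀ a : A, (D ∘L ContinuousLinearMap.adjoint D) (δ a) = δ a) :
    (∀ a b : A,
      ContinuousLinearMap.adjoint D ∘L ρ a ∘L D
          ∘L ContinuousLinearMap.adjoint D ∘L ρ b ∘L D
        = ContinuousLinearMap.adjoint D ∘L ρ (a * b) ∘L D)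
    ∧ (∀ a b : A,
      lam (star a * b)
        = (inner ℂ (ContinuousLinearMap.adjoint D (δ a) + ε a • d)
            (ContinuousLinearMap.adjoint D (δ b) + ε b • d) : ℂ)
          + lam (star a) * ε b + ε (star a) * lam b) := by
  refine ⟨fun a b => ?_, fun a b => ?_⟩
  · rw [proj_comp_comp_eq_of_commute hpi (hcomm b), map_mul]
    rfl
  · rw [inner_adjoint_add_smul_adjoint_add_smul hDd (hDDδ b), hδ a, hδ b,
      inner_map_apply_sub_smul, hlam, hlam, hlam, map_mul, map_star, Complex.star_def, ht]
    push_cast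
    ring

/-- Under the conditions `D` a partial isometry, `Dd = 0`, `DD* ∈ ρ(A)'`, `t = −‖d‖²` and
`DD*δ = δ`, the block-matrix structure relations (i) and (ii) hold, where
`δ(a) = (ρ(a) − ε(a))|ξ⟩` and `λ(a) = ε(a)(t − ‖ξ‖²) + ⟨ξ, ρ(a)ξ⟩`. -/
theorem stmt_11 {A : Type*} [NormedRing A] [StarRing A] [CStarRing A]
    [NormedAlgebra ℂ A] [StarModule ℂ A]
    {k K : Type*}
    [NormedAddCommGroup k] [InnerProductSpace ℂ k] [CompleteSpace k]
    [NormedAddCommGroup K] [InnerProductSpace ℂ K] [CompleteSpace K]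
    (ε : A →⋆ₐ[ℂ] ℂ) (ρ : A →⋆ₐ[ℂ] (K →L[ℂ] K))
    (D : k →L[ℂ] K) (d : k) (ξ : K) (t : ℝ)
    (δ : A → K) (hδ : ∀ a : A, δ a = ρ a ξ - ε a • ξ)
    (lam : A → ℂ)
    (hlam : ∀ a : A, lam a = ε a * ((t : ℂ) - (‖ξ‖ ^ 2 : ℝ)) + (inner ℂ ξ (ρ a ξ) : ℂ))
    (hpi : D ∘L ContinuousLinearMap.adjoint D ∘L D = D)
    (hDd : D d = 0)
    (hcomm : ∀ a : A, (D ∘L ContinuousLinearMap.adjoint D) ∘L ρ a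
        = ρ a ∘L (D ∘L ContinuousLinearMap.adjoint D))
    (ht : t = -‖d‖ ^ 2)
    (hDDδ : ∀ a : A, (D ∘L ContinuousLinearMap.adjoint D) (δ a) = δ a) :
    (∀ a b : A,
      ContinuousLinearMap.adjoint D ∘L ρ a ∘L D
          ∘L ContinuousLinearMap.adjoint D ∘L ρ b ∘L D
        = ContinuousLinearMap.adjoint D ∘L ρ (a * b) ∘L D)
    ∧ (∀ a b : A,
      lam (star a * b)
        = (inner ℂ (ContinuousLinearMap.adjoint D (δ a) + ε a • d)
            (ContinuousLinearMap.adjoint D (δ b) + ε b • d) : ℂ)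
          + lam (star a) * ε b + ε (star a) * lam b) :=
  stmt_11_general ε ρ D d ξ t δ hδ lam hlam hpi hDd hcomm ht hDDδ
end

section
/- Let A be a unital C*-algebra with character ε, K a Hilbert space, and suppose given linear maps δ: A → B(ℂ;K), γ: A → B(k;K), a functional λ: A → ℂ, and a map η: A → B(ℂ;k) such that for all a, b ∈ A: δ(a)*δ(b) = λ(a*b) − ε(a*)λ(b) − λ(a*)ε(b) + ε(a*)λ(1)ε(b) and γ(a)*δ(b) = η(a*b) − η(a*)ε(b), and δ(a)*γ(b), γ(a)*γ(b) are determined by maps ν, σ via γ(a)*γ(b) = σ(a*b). For a unitary u ∈ A, define δ_u(a) = δ(ua) − δ(u)ε(a) and γ_u(a) = γ(ua). Then for all a₁, a₂ ∈ A and the column maps χ = [δ γ], χ_u = [δ_u γ_u] (from A to B(ℂ ⊕ k; K)) one has χ_u(a₁)* χ_u(a₂) = χ(a₁)* χ(a₂). -/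
/-!
Since `star u * u = 1`, left multiplication by `u` preserves every product `star x * y`, while
`star (u * x) * u = star x`. Each block of `χ_u(a₁)* χ_u(a₂)` is a combination of the
kernels `lam`, `η`, `σ` evaluated at such products, so the blocks `δ*δ`, `γ*δ`, `γ*γ` are
unchanged; the block `δ*γ` is the adjoint of `γ*δ`.
-/

open ContinuousLinearMap

section Isometry

variable {M : Type*} [Monoid M] [StarMul M] {u : M}

theorem star_mul_mul_mul_of_star_mul_self (hu : star u * u = 1) (x y : M) :
    star (u * x) * (u * y) = star x * y := by
  rw [star_mul, mul_assoc, ← mul_assoc (star u), hu, one_mul]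

theorem star_mul_mul_of_star_mul_self (hu : star u * u = 1) (x : M) :
    star (u * x) * u = star x := by
  simpa using star_mul_mul_mul_of_star_mul_self hu x 1

theorem star_mul_mul_self_of_star_mul_self (hu : star u * u = 1) (y : M) :
    star u * (u * y) = y := by
  simpa using star_mul_mul_mul_of_star_mul_self hu 1 y

end Isometry

theorem adjoint_twist_comp_twist_eq {M E F : Type*} [Monoid M] [StarMul M] {u : M}
    [NormedAddCommGroup E] [InnerProductSpace ℂ E] [CompleteSpace E]
    [NormedAddCommGroup F] [InnerProductSpace ℂ F] [CompleteSpace F]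
    (hu : star u * u = 1) (γ : M → (F →L[ℂ] E))
    (σ : M → (F →L[ℂ] F)) (hγγ : ∀ a b : M, adjoint (γ a) ∘L γ b = σ (star a * b))
    (a b : M) :
    adjoint (γ (u * a)) ∘L γ (u * b) = adjoint (γ a) ∘L γ b := by
  rw [hγγ, hγγ, star_mul_mul_mul_of_star_mul_self hu]

section Twist

variable {A : Type*} [Ring A] [StarRing A] [Algebra ℂ A] (ε : A →⋆ₐ[ℂ] ℂ) {u : A}
  {E F : Type*} [NormedAddCommGroup E] [InnerProductSpace ℂ E]
  [NormedAddCommGroup F] [InnerProductSpace ℂ F]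

theorem inner_twist_eq_of_inner_eq (hu : star u * u = 1) (δ : A → E) (lam : A → ℂ)
    (hδ : ∀ a b : A, (inner ℂ (δ a) (δ b) : ℂ)
      = lam (star a * b) - ε (star a) * lam b - lam (star a) * ε b
          + ε (star a) * lam 1 * ε b)
    (a b : A) :
    (inner ℂ (δ (u * a) - ε a • δ u) (δ (u * b) - ε b • δ u) : ℂ) = inner ℂ (δ a) (δ b) := by
  simp only [inner_sub_left, inner_sub_right, inner_smul_left, inner_smul_right, hδ,
    star_mul_mul_mul_of_star_mul_self hu, star_mul_mul_of_star_mul_self hu,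
    star_mul_mul_self_of_star_mul_self hu, hu]
  simp only [starRingEnd_apply, ← map_star, star_mul, map_mul]
  ring

variable [CompleteSpace E] [CompleteSpace F]

theorem adjoint_twist_apply_twist_eq (hu : star u * u = 1) (δ : A → E)
    (γ : A → (F →L[ℂ] E)) (η : A → F)
    (hγδ : ∀ a b : A, adjoint (γ a) (δ b) = η (star a * b) - ε b • η (star a))
    (a b : A) :
    adjoint (γ (u * a)) (δ (u * b) - ε b • δ u) = adjoint (γ a) (δ b) := by
  simp only [map_sub, map_smul, hγδ, star_mul_mul_mul_of_star_mul_self hu,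
    star_mul_mul_of_star_mul_self hu, map_mul]
  module

end Twist

theorem stmt_13_general {A : Type*} [NormedRing A] [StarRing A]
    [NormedAlgebra ℂ A]
    {k K : Type*}
    [NormedAddCommGroup k] [InnerProductSpace ℂ k] [CompleteSpace k]
    [NormedAddCommGroup K] [InnerProductSpace ℂ K] [CompleteSpace K]
    (ε : A →⋆ₐ[ℂ] ℂ)
    (δ : A → K) (γ : A → (k →L[ℂ] K)) (lam : A → ℂ) (η : A → k)
    (σ : A → (k →L[ℂ] k))
    (h1 : ∀ a b : A, (inner ℂ (δ a) (δ b) : ℂ)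
      = lam (star a * b) - ε (star a) * lam b - lam (star a) * ε b
          + ε (star a) * lam 1 * ε b)
    (h2 : ∀ a b : A, ContinuousLinearMap.adjoint (γ a) (δ b)
      = η (star a * b) - ε b • η (star a))
    (h4 : ∀ a b : A, ContinuousLinearMap.adjoint (γ a) ∘L γ b = σ (star a * b))
    (u : A) (hu : u ∈ unitary A)
    (δu : A → K) (hδu : ∀ a : A, δu a = δ (u * a) - ε a • δ u)
    (γu : A → (k →L[ℂ] K)) (hγu : ∀ a : A, γu a = γ (u * a)) :
    ∀ a b : A,
      ((inner ℂ (δu a) (δu b) : ℂ) = (inner ℂ (δ a) (δ b) : ℂ))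
      ∧ (ContinuousLinearMap.adjoint (γu a) (δu b)
          = ContinuousLinearMap.adjoint (γ a) (δ b))
      ∧ (∀ c : k, (inner ℂ (δu a) (γu b c) : ℂ) = (inner ℂ (δ a) (γ b c) : ℂ))
      ∧ (ContinuousLinearMap.adjoint (γu a) ∘L γu b
          = ContinuousLinearMap.adjoint (γ a) ∘L γ b) := by
  have hu' : star u * u = 1 := Unitary.star_mul_self_of_mem hu
  have hγδ : ∀ a b : A, adjoint (γu a) (δu b) = adjoint (γ a) (δ b) := fun a b => by
    rw [hγu, hδu, adjoint_twist_apply_twist_eq ε hu' δ γ η h2]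
  refine fun a b => ⟨?_, hγδ a b, fun c => ?_, ?_⟩
  · rw [hδu, hδu, inner_twist_eq_of_inner_eq ε hu' δ lam h1]
  · rw [← adjoint_inner_left, hγδ, adjoint_inner_left]
  · rw [hγu, hγu, adjoint_twist_comp_twist_eq hu' γ σ h4]

/-- Unitary twisting `δ_u(a) = δ(ua) − δ(u)ε(a)`, `γ_u(a) = γ(ua)` leaves the Kolmogorov
kernel `χ(a₁)*χ(a₂)` of `χ = [δ γ]` invariant: all four block entries of
`χ_u(a₁)*χ_u(a₂)` agree with those of `χ(a₁)*χ(a₂)`. -/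
theorem stmt_13 {A : Type*} [NormedRing A] [StarRing A] [CStarRing A]
    [NormedAlgebra ℂ A] [StarModule ℂ A]
    {k K : Type*}
    [NormedAddCommGroup k] [InnerProductSpace ℂ k] [CompleteSpace k]
    [NormedAddCommGroup K] [InnerProductSpace ℂ K] [CompleteSpace K]
    (ε : A →⋆ₐ[ℂ] ℂ)
    (δ : A → K) (γ : A → (k →L[ℂ] K)) (lam : A → ℂ) (η : A → k)
    (σ : A → (k →L[ℂ] k))
    (h1 : ∀ a b : A, (inner ℂ (δ a) (δ b) : ℂ)
      = lam (star a * b) - ε (star a) * lam b - lam (star a) * ε b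
          + ε (star a) * lam 1 * ε b)
    (h2 : ∀ a b : A, ContinuousLinearMap.adjoint (γ a) (δ b)
      = η (star a * b) - ε b • η (star a))
    (h3 : ∀ (a b : A) (c : k), (inner ℂ (δ a) (γ b c) : ℂ)
      = (inner ℂ (η (star b * a) - ε a • η (star b)) c : ℂ))
    (h4 : ∀ a b : A, ContinuousLinearMap.adjoint (γ a) ∘L γ b = σ (star a * b))
    (u : A) (hu : u ∈ unitary A)
    (δu : A → K) (hδu : ∀ a : A, δu a = δ (u * a) - ε a • δ u)
    (γu : A → (k →L[ℂ] K)) (hγu : ∀ a : A, γu a = γ (u * a)) :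
    ∀ a b : A,
      ((inner ℂ (δu a) (δu b) : ℂ) = (inner ℂ (δ a) (δ b) : ℂ))
      ∧ (ContinuousLinearMap.adjoint (γu a) (δu b)
          = ContinuousLinearMap.adjoint (γ a) (δ b))
      ∧ (∀ c : k, (inner ℂ (δu a) (γu b c) : ℂ) = (inner ℂ (δ a) (γ b c) : ℂ))
      ∧ (ContinuousLinearMap.adjoint (γu a) ∘L γu b
          = ContinuousLinearMap.adjoint (γ a) ∘L γ b) :=
  stmt_13_general ε δ γ lam η σ h1 h2 h4 u hu δu hδu γu hγu
end
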